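/- In a deterministic game, for any player-1 strategy σ, any player-2 strategy τ, and all rounds i, the support of the i-th outcome distribution under (σ, τ) is contained in the support of the i-th outcome distribution under (σ, τ_u), where τ_u is the uniformly randomizing player-2 strategy. Consequently, player 1 is sure winning for a synchronizing mode if and only if player 1 is sure winning against τ_u. -/
import Mathlib


open Finset

/-- A two-player stochastic game: transition kernel `δ q a b q'`. -/
structure Game (Q A : Type) where
  δ : Q → A → A → Q → ℝ

/-- Validity of the transition kernel: a probability distribution on `Q` for each `q,a,b`. -/
def IsGame {Q A : Type} [Fintype Q] (G : Game Q A) : Prop :=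
  (∀ q a b q', 0 ≤ G.δ q a b q') ∧ (∀ q a b, (∑ q' : Q, G.δ q a b q') = 1)

/-- A probability distribution over a finite set. -/
def IsDist {Q : Type} [Fintype Q] (d : Q → ℝ) : Prop :=
  (∀ q, 0 ≤ d q) ∧ (∑ q : Q, d q) = 1

/-- Randomized player-1 strategies: map (reversed) state histories to distributions on actions. -/
abbrev Strat1 (Q A : Type) := List Q → A → ℝ
/-- Randomized player-2 strategies: also see the action chosen by player 1. -/
abbrev Strat2 (Q A : Type) := List Q → A → A → ℝ

def IsStrat1 {Q A : Type} [Fintype A] (σ : Strat1 Q A) : Prop :=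
  ∀ h, (∀ a, 0 ≤ σ h a) ∧ (∑ a : A, σ h a) = 1

def IsStrat2 {Q A : Type} [Fintype A] (τ : Strat2 Q A) : Prop :=
  ∀ h a, (∀ b, 0 ≤ τ h a b) ∧ (∑ b : A, τ h a b) = 1

/-- Probability of a finite state history (in reverse chronological order:
the head is the current state), with the actions marginalized out. -/
def hprob {Q A : Type} [Fintype A] (G : Game Q A) (d0 : Q → ℝ)
    (σ : Strat1 Q A) (τ : Strat2 Q A) : List Q → ℝ
  | [] => 1
  | [q] => d0 q
  | q :: q' :: h =>
      (∑ a : A, ∑ b : A, σ (q' :: h) a * τ (q' :: h) a b * G.δ q' a b q) *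
        hprob G d0 σ τ (q' :: h)

/-- The outcome sequence of distributions: probability to be in state `q` after `i` rounds. -/
def outSeq {Q A : Type} [Fintype Q] [Fintype A] (G : Game Q A) (d0 : Q → ℝ)
    (σ : Strat1 Q A) (τ : Strat2 Q A) (i : ℕ) (q : Q) : ℝ :=
  ∑ h : Fin i → Q, hprob G d0 σ τ (q :: (List.ofFn h).reverse)

/-- Probability mass of a set of states. -/
def mass {Q : Type} (d : Q → ℝ) (T : Finset Q) : ℝ := ∑ q ∈ T, d q

/-- The four synchronizing modes, on a sequence of probability masses. -/
def AlwaysSync (m : ℕ → ℝ) (ε : ℝ) : Prop := ∀ i, 1 - ε ≤ m i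
def EventSync (m : ℕ → ℝ) (ε : ℝ) : Prop := ∃ i, 1 - ε ≤ m i
def WeaklySync (m : ℕ → ℝ) (ε : ℝ) : Prop := ∀ N, ∃ i, N ≤ i ∧ 1 - ε ≤ m i
def StronglySync (m : ℕ → ℝ) (ε : ℝ) : Prop := ∃ N, ∀ i, N ≤ i → 1 - ε ≤ m i

/-- Sure winning region for a synchronizing mode `sync`: some player-1 strategy ensures
`1`-synchronization against all player-2 strategies. -/
def SureWin {Q A : Type} [Fintype Q] [Fintype A] (G : Game Q A) (T : Finset Q)
    (sync : (ℕ → ℝ) → ℝ → Prop) : Set (Q → ℝ) :=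
  {d0 | IsDist d0 ∧ ∃ σ, IsStrat1 σ ∧ ∀ τ, IsStrat2 τ →
    sync (fun i => mass (outSeq G d0 σ τ i) T) 0}

/-- Almost-sure winning region for a synchronizing mode `sync`: some player-1 strategy
ensures `(1-ε)`-synchronization for all `ε > 0` against all player-2 strategies. -/
def ASWin {Q A : Type} [Fintype Q] [Fintype A] (G : Game Q A) (T : Finset Q)
    (sync : (ℕ → ℝ) → ℝ → Prop) : Set (Q → ℝ) :=
  {d0 | IsDist d0 ∧ ∃ σ, IsStrat1 σ ∧ ∀ τ, IsStrat2 τ →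
    ∀ ε : ℝ, 0 < ε → sync (fun i => mass (outSeq G d0 σ τ i) T) ε}

/-- Dirac distribution. -/
def dirac {Q : Type} [DecidableEq Q] (q : Q) : Q → ℝ := fun q' => if q' = q then 1 else 0

/-- The stochastic game induced by a deterministic game `δ : Q → A → A → Q`. -/
def detGame {Q A : Type} [DecidableEq Q] (δ : Q → A → A → Q) : Game Q A :=
  ⟨fun q a b q' => if q' = δ q a b then 1 else 0⟩

/-- The uniformly randomizing player-2 strategy `τ_u`. -/
noncomputable def uniform2 (Q A : Type) [Fintype A] : Strat2 Q A :=
  fun _ _ _ => (Fintype.card A : ℝ)⁻¹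


section Aux

variable {Q A : Type} [Fintype Q] [Fintype A]

lemma hprob_single (G : Game Q A) (d0 : Q → ℝ) (σ : Strat1 Q A) (τ : Strat2 Q A) (q : Q) :
    hprob G d0 σ τ [q] = d0 q := rfl

lemma hprob_cons (G : Game Q A) (d0 : Q → ℝ) (σ : Strat1 Q A) (τ : Strat2 Q A)
    (q q' : Q) (h : List Q) :
    hprob G d0 σ τ (q :: q' :: h) =
      (∑ a : A, ∑ b : A, σ (q' :: h) a * τ (q' :: h) a b * G.δ q' a b q) *
        hprob G d0 σ τ (q' :: h) := rfl

lemma hprob_nonneg (G : Game Q A) (hG : ∀ q a b q', 0 ≤ G.δ q a b q')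
    (d0 : Q → ℝ) (hd0 : ∀ q, 0 ≤ d0 q) (σ : Strat1 Q A) (hσ : IsStrat1 σ)
    (τ : Strat2 Q A) (hτ : IsStrat2 τ) :
    ∀ (h : List Q) (q : Q), 0 ≤ hprob G d0 σ τ (q :: h) := by
  intro h
  induction h with
  | nil => intro q; exact hd0 q
  | cons q' h ih =>
      intro q
      rw [hprob_cons]
      exact mul_nonneg (Finset.sum_nonneg fun a _ => Finset.sum_nonneg fun b _ =>
        mul_nonneg (mul_nonneg ((hσ _).1 a) ((hτ _ _).1 b)) (hG _ _ _ _)) (ih q')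

lemma isStrat2_uniform2 [Nonempty A] : IsStrat2 (uniform2 Q A) := by
  have hc : (0:ℝ) < (Fintype.card A : ℝ) := by
    exact_mod_cast Fintype.card_pos
  intro h a
  constructor
  · intro b; exact inv_nonneg.mpr hc.le
  · simp only [uniform2, Finset.sum_const, Finset.card_univ, nsmul_eq_mul]
    exact mul_inv_cancel₀ hc.ne'

lemma hprob_le_uniform [Nonempty A] (G : Game Q A) (hG : ∀ q a b q', 0 ≤ G.δ q a b q')
    (d0 : Q → ℝ) (hd0 : ∀ q, 0 ≤ d0 q) (σ : Strat1 Q A) (hσ : IsStrat1 σ)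
    (τ : Strat2 Q A) (hτ : IsStrat2 τ) :
    ∀ (h : List Q) (q : Q), hprob G d0 σ τ (q :: h) ≤
      (Fintype.card A : ℝ) ^ h.length * hprob G d0 σ (uniform2 Q A) (q :: h) := by
  have hc : (0:ℝ) < (Fintype.card A : ℝ) := by exact_mod_cast Fintype.card_pos
  intro h
  induction h with
  | nil => intro q; simp [hprob_single]
  | cons q' h ih =>
      intro q
      rw [hprob_cons, hprob_cons]
      have hτle : ∀ (ℓ : List Q) (a b : A), τ ℓ a b ≤ 1 := by
        intro ℓ a b
        have := Finset.single_le_sum (f := fun b => τ ℓ a b)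
          (fun b _ => (hτ ℓ a).1 b) (Finset.mem_univ b)
        rw [(hτ ℓ a).2] at this
        exact this
      have hstep : (∑ a : A, ∑ b : A, σ (q' :: h) a * τ (q' :: h) a b * G.δ q' a b q) ≤
          (Fintype.card A : ℝ) *
            (∑ a : A, ∑ b : A, σ (q' :: h) a * uniform2 Q A (q' :: h) a b * G.δ q' a b q) := by
        rw [Finset.mul_sum]
        refine Finset.sum_le_sum fun a _ => ?_
        rw [Finset.mul_sum]
        refine Finset.sum_le_sum fun b _ => ?_
        have heq : (Fintype.card A : ℝ) *
            (σ (q' :: h) a * uniform2 Q A (q' :: h) a b * G.δ q' a b q) =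
            σ (q' :: h) a * G.δ q' a b q := by
          simp only [uniform2]
          field_simp
        rw [heq]
        calc σ (q' :: h) a * τ (q' :: h) a b * G.δ q' a b q
            ≤ σ (q' :: h) a * 1 * G.δ q' a b q := by
              refine mul_le_mul_of_nonneg_right ?_ (hG _ _ _ _)
              exact mul_le_mul_of_nonneg_left (hτle _ a b) ((hσ _).1 a)
          _ = σ (q' :: h) a * G.δ q' a b q := by ring
      have hstepU0 : 0 ≤ ∑ a : A, ∑ b : A,
          σ (q' :: h) a * uniform2 Q A (q' :: h) a b * G.δ q' a b q :=
        Finset.sum_nonneg fun a _ => Finset.sum_nonneg fun b _ =>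
          mul_nonneg (mul_nonneg ((hσ _).1 a) (inv_nonneg.mpr hc.le)) (hG _ _ _ _)
      have hτ0 : 0 ≤ hprob G d0 σ τ (q' :: h) := hprob_nonneg G hG d0 hd0 σ hσ τ hτ h q'
      calc (∑ a : A, ∑ b : A, σ (q' :: h) a * τ (q' :: h) a b * G.δ q' a b q) *
            hprob G d0 σ τ (q' :: h)
          ≤ ((Fintype.card A : ℝ) *
              (∑ a : A, ∑ b : A, σ (q' :: h) a * uniform2 Q A (q' :: h) a b * G.δ q' a b q)) *
            ((Fintype.card A : ℝ) ^ h.length * hprob G d0 σ (uniform2 Q A) (q' :: h)) :=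
            mul_le_mul hstep (ih q') hτ0 (mul_nonneg hc.le hstepU0)
        _ = (Fintype.card A : ℝ) ^ (q' :: h).length *
            ((∑ a : A, ∑ b : A, σ (q' :: h) a * uniform2 Q A (q' :: h) a b * G.δ q' a b q) *
              hprob G d0 σ (uniform2 Q A) (q' :: h)) := by
            simp [List.length_cons, pow_succ]
            ring

lemma outSeq_nonneg (G : Game Q A) (hG : ∀ q a b q', 0 ≤ G.δ q a b q')
    (d0 : Q → ℝ) (hd0 : ∀ q, 0 ≤ d0 q) (σ : Strat1 Q A) (hσ : IsStrat1 σ)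
    (τ : Strat2 Q A) (hτ : IsStrat2 τ) (i : ℕ) (q : Q) :
    0 ≤ outSeq G d0 σ τ i q :=
  Finset.sum_nonneg fun h _ => hprob_nonneg G hG d0 hd0 σ hσ τ hτ _ q

lemma outSeq_pos_uniform [Nonempty A] (G : Game Q A) (hG : ∀ q a b q', 0 ≤ G.δ q a b q')
    (d0 : Q → ℝ) (hd0 : ∀ q, 0 ≤ d0 q) (σ : Strat1 Q A) (hσ : IsStrat1 σ)
    (τ : Strat2 Q A) (hτ : IsStrat2 τ) (i : ℕ) (q : Q)
    (hpos : 0 < outSeq G d0 σ τ i q) : 0 < outSeq G d0 σ (uniform2 Q A) i q := by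
  have hu : IsStrat2 (uniform2 Q A) := isStrat2_uniform2
  have hle : outSeq G d0 σ τ i q ≤
      (Fintype.card A : ℝ) ^ i * outSeq G d0 σ (uniform2 Q A) i q := by
    unfold outSeq
    rw [Finset.mul_sum]
    refine Finset.sum_le_sum fun h _ => ?_
    have := hprob_le_uniform G hG d0 hd0 σ hσ τ hτ ((List.ofFn h).reverse) q
    simpa using this
  rcases (outSeq_nonneg G hG d0 hd0 σ hσ (uniform2 Q A) hu i q).lt_or_eq with h0 | h0
  · exact h0
  · exfalso
    rw [← h0, mul_zero] at hle
    exact absurd (lt_of_lt_of_le hpos hle) (lt_irrefl 0)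

lemma sum_hprob (G : Game Q A) (hG : IsGame G) (d0 : Q → ℝ) (hd0 : IsDist d0)
    (σ : Strat1 Q A) (hσ : IsStrat1 σ) (τ : Strat2 Q A) (hτ : IsStrat2 τ) :
    ∀ n : ℕ, ∑ q : Q, ∑ h : Fin n → Q, hprob G d0 σ τ (q :: (List.ofFn h).reverse) = 1 := by
  intro n
  induction n with
  | zero => simpa [hprob_single] using hd0.2
  | succ n ih =>
      have key : ∀ (q : Q) (h : Fin (n + 1) → Q),
          (q :: (List.ofFn h).reverse : List Q) =
            q :: h (Fin.last n) :: (List.ofFn fun i => h i.castSucc).reverse := by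
        intro q h
        rw [List.ofFn_succ', List.concat_eq_append, List.reverse_append]
        simp
      have hstep : ∀ (ℓ : List Q) (q'' : Q),
          ∑ q : Q, ∑ a : A, ∑ b : A, σ ℓ a * τ ℓ a b * G.δ q'' a b q = 1 := by
        intro ℓ q''
        have swap : (∑ q : Q, ∑ a : A, ∑ b : A, σ ℓ a * τ ℓ a b * G.δ q'' a b q) =
            ∑ a : A, ∑ b : A, ∑ q : Q, σ ℓ a * τ ℓ a b * G.δ q'' a b q := by
          rw [Finset.sum_comm]
          exact Finset.sum_congr rfl fun a _ => Finset.sum_comm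
        rw [swap]
        have h1 : ∀ a b : A, (∑ q : Q, σ ℓ a * τ ℓ a b * G.δ q'' a b q) =
            σ ℓ a * τ ℓ a b := by
          intro a b
          rw [← Finset.mul_sum, hG.2, mul_one]
        simp_rw [h1]
        have h2 : ∀ a : A, (∑ b : A, σ ℓ a * τ ℓ a b) = σ ℓ a := by
          intro a
          rw [← Finset.mul_sum, (hτ ℓ a).2, mul_one]
        simp_rw [h2]
        exact (hσ ℓ).2
      simp_rw [key, hprob_cons]
      rw [Finset.sum_comm]
      have hcol : ∀ h : Fin (n + 1) → Q,
          (∑ q : Q, (∑ a : A, ∑ b : A,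
              σ (h (Fin.last n) :: (List.ofFn fun i => h i.castSucc).reverse) a *
                τ (h (Fin.last n) :: (List.ofFn fun i => h i.castSucc).reverse) a b *
                G.δ (h (Fin.last n)) a b q) *
            hprob G d0 σ τ (h (Fin.last n) :: (List.ofFn fun i => h i.castSucc).reverse)) =
          hprob G d0 σ τ (h (Fin.last n) :: (List.ofFn fun i => h i.castSucc).reverse) := by
        intro h
        rw [← Finset.sum_mul, hstep, one_mul]
      rw [Finset.sum_congr rfl fun h _ => hcol h]
      have := Equiv.sum_comp (Fin.snocEquiv (fun _ : Fin (n + 1) => Q))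
        (fun h : Fin (n + 1) → Q =>
          hprob G d0 σ τ (h (Fin.last n) :: (List.ofFn fun i => h i.castSucc).reverse))
      rw [← this, Fintype.sum_prod_type]
      have heval : ∀ (q : Q) (g : Fin n → Q),
          (fun h : Fin (n + 1) → Q =>
            hprob G d0 σ τ (h (Fin.last n) :: (List.ofFn fun i => h i.castSucc).reverse))
            (Fin.snocEquiv (fun _ : Fin (n + 1) => Q) (q, g)) =
          hprob G d0 σ τ (q :: (List.ofFn g).reverse) := by
        intro q g
        simp [Fin.snocEquiv, Fin.snoc_last, Fin.snoc_castSucc]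
      simp_rw [heval]
      exact ih

lemma outSeq_sum (G : Game Q A) (hG : IsGame G) (d0 : Q → ℝ) (hd0 : IsDist d0)
    (σ : Strat1 Q A) (hσ : IsStrat1 σ) (τ : Strat2 Q A) (hτ : IsStrat2 τ) (i : ℕ) :
    ∑ q : Q, outSeq G d0 σ τ i q = 1 :=
  sum_hprob G hG d0 hd0 σ hσ τ hτ i

lemma mass_ge_of_supp [DecidableEq Q] {T : Finset Q} (d e : Q → ℝ) (hd : ∀ q, 0 ≤ d q) (he : ∀ q, 0 ≤ e q)
    (hds : ∑ q : Q, d q = 1) (hes : ∑ q : Q, e q = 1)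
    (hsupp : ∀ q, 0 < d q → 0 < e q) (h1 : 1 ≤ mass e T) : 1 ≤ mass d T := by
  have hsplit : mass e T + ∑ q ∈ Tᶜ, e q = 1 := by
    rw [mass, Finset.sum_add_sum_compl, hes]
  have hec : ∑ q ∈ Tᶜ, e q = 0 := by
    have hle : ∑ q ∈ Tᶜ, e q ≤ 0 := by linarith
    have hge : 0 ≤ ∑ q ∈ Tᶜ, e q := Finset.sum_nonneg fun q _ => he q
    linarith
  have he0 : ∀ q ∈ Tᶜ, e q = 0 :=
    (Finset.sum_eq_zero_iff_of_nonneg fun q _ => he q).mp hec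
  have hd0 : ∀ q ∈ Tᶜ, d q = 0 := by
    intro q hq
    by_contra hne
    have hpos : 0 < d q := lt_of_le_of_ne (hd q) (Ne.symm hne)
    have := hsupp q hpos
    rw [he0 q hq] at this
    exact lt_irrefl 0 this
  have hdc : ∑ q ∈ Tᶜ, d q = 0 := Finset.sum_eq_zero hd0
  have hdsplit : mass d T + ∑ q ∈ Tᶜ, d q = 1 := by
    rw [mass, Finset.sum_add_sum_compl, hds]
  linarith

end Aux

/-- in a deterministic game, for every player-1 strategy `σ`, every
player-2 strategy `τ` and every round `i`, the support of the `i`-th outcome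
distribution under `(σ, τ)` is contained in the support of the `i`-th outcome
distribution under `(σ, τ_u)`; consequently, for each synchronizing mode, player 1
is sure winning iff player 1 is sure winning against the uniform strategy `τ_u`. -/
theorem sure_winning_against_uniform {Q A : Type} [Fintype Q] [Fintype A]
    [DecidableEq Q] [Nonempty A]
    (δ : Q → A → A → Q) (d0 : Q → ℝ) (hd0 : IsDist d0) (T : Finset Q) :
    (∀ σ, IsStrat1 σ → ∀ τ, IsStrat2 τ → ∀ (i : ℕ) (q : Q),
        0 < outSeq (detGame δ) d0 σ τ i q →
        0 < outSeq (detGame δ) d0 σ (uniform2 Q A) i q) ∧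
    (∀ sync ∈ ([AlwaysSync, EventSync, WeaklySync, StronglySync] :
        List ((ℕ → ℝ) → ℝ → Prop)),
      d0 ∈ SureWin (detGame δ) T sync ↔
        ∃ σ, IsStrat1 σ ∧
          sync (fun i => mass (outSeq (detGame δ) d0 σ (uniform2 Q A) i) T) 0) := by
  have hd0n := hd0.1
  have hGd : ∀ q a b q', 0 ≤ (detGame δ).δ q a b q' := by
    intro q a b q'
    simp only [detGame]
    split <;> norm_num
  have hG : IsGame (detGame δ) := by
    refine ⟨hGd, fun q a b => ?_⟩
    simp [detGame]
  have hu : IsStrat2 (uniform2 Q A) := isStrat2_uniform2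
  have supp : ∀ σ, IsStrat1 σ → ∀ τ, IsStrat2 τ → ∀ (i : ℕ) (q : Q),
      0 < outSeq (detGame δ) d0 σ τ i q →
      0 < outSeq (detGame δ) d0 σ (uniform2 Q A) i q := by
    intro σ hσ τ hτ i q hpos
    exact outSeq_pos_uniform (detGame δ) hGd d0 hd0n σ hσ τ hτ i q hpos
  refine ⟨supp, ?_⟩
  intro sync hs
  constructor
  · rintro ⟨_, σ, hσ, hwin⟩
    exact ⟨σ, hσ, hwin _ hu⟩
  · rintro ⟨σ, hσ, hwinU⟩
    refine ⟨hd0, σ, hσ, fun τ hτ => ?_⟩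
    have hpt : ∀ i : ℕ,
        1 - 0 ≤ mass (outSeq (detGame δ) d0 σ (uniform2 Q A) i) T →
        1 - 0 ≤ mass (outSeq (detGame δ) d0 σ τ i) T := by
      intro i h
      have h' : (1:ℝ) ≤ mass (outSeq (detGame δ) d0 σ (uniform2 Q A) i) T := by linarith
      have := mass_ge_of_supp (T := T)
        (outSeq (detGame δ) d0 σ τ i) (outSeq (detGame δ) d0 σ (uniform2 Q A) i)
        (outSeq_nonneg _ hGd d0 hd0n σ hσ τ hτ i)
        (outSeq_nonneg _ hGd d0 hd0n σ hσ _ hu i)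
        (outSeq_sum _ hG d0 hd0 σ hσ τ hτ i)
        (outSeq_sum _ hG d0 hd0 σ hσ _ hu i)
        (fun q hq => supp σ hσ τ hτ i q hq) h'
      linarith
    simp only [List.mem_cons, List.not_mem_nil, or_false] at hs
    rcases hs with rfl | rfl | rfl | rfl
    · intro i
      exact hpt i (hwinU i)
    · obtain ⟨i, hi⟩ := hwinU
      exact ⟨i, hpt i hi⟩
    · intro N
      obtain ⟨i, hNi, hi⟩ := hwinU N
      exact ⟨i, hNi, hpt i hi⟩
    · obtain ⟨N, hN⟩ := hwinU
      exact ⟨N, fun i hNi => hpt i (hN i hNi)⟩
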